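/- arXiv:2407.01693 — 8 statements merged into one kernel-verified Lean document; each statement's English description precedes it below -/
import Mathlib

section
/- Let d ≥ 2 and let N be a natural number with 1 ≤ N < d². Let ψ_0, …, ψ_N be unit vectors in ℂ^d such that the rank-one projections |ψ_y⟩⟨ψ_y| (y = 0, …, N) are linearly independent over ℂ, and let φ_0, …, φ_{d²−1} be unit vectors in ℂ^d such that the rank-one projections |φ_x⟩⟨φ_x| (x = 0, …, d²−1) are linearly independent over ℂ (hence span the full space of d×d complex matrices). Let Γ_1, …, Γ_N be arbitrary d×d complex matrices. Then there do NOT exist scalars λ_{i,y} ∈ ℂ (1 ≤ i ≤ N, 0 ≤ y ≤ N) and effects E_0, …, E_{d²−1} on ℂ^d such that Tr((Σ_{i=1}^N λ_{i,y} Γ_i) · E_x) = |⟨ψ_y, φ_x⟩|² holds for all x ∈ {0,…,d²−1} and y ∈ {0,…,N}. In particular, the quantum correlations p_Q(0|x,y) = |⟨ψ_y, φ_x⟩|² cannot be realized by preparations lying in the linear span of any family of fewer than d² linearly independent free states. -/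
open Matrix Complex
open scoped ComplexOrder

/-- The rank-one projection (outer product) `|ψ⟩⟨ψ|` of a vector `ψ ∈ ℂ^d`. -/
noncomputable def outer {d : ℕ} (ψ : Fin d → ℂ) : Matrix (Fin d) (Fin d) ℂ :=
  Matrix.of fun i j => ψ i * (starRingEnd ℂ) (ψ j)

/-- The inner product `⟨ψ, φ⟩ = ∑ i, conj (ψ i) * φ i` on `ℂ^d`. -/
noncomputable def qinner {d : ℕ} (ψ φ : Fin d → ℂ) : ℂ :=
  ∑ i, (starRingEnd ℂ) (ψ i) * φ i

/-- An effect (POVM element) on `ℂ^d`: both `E` and `1 - E` are positive semidefinite. -/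
def IsEffect {d : ℕ} (E : Matrix (Fin d) (Fin d) ℂ) : Prop :=
  E.PosSemidef ∧ (1 - E).PosSemidef

/-!
If the preparations `ρ_y = ∑ i, λ_{i,y} Γ_i` reproduced the statistics `Tr(ρ_y E_x)` of the
pure preparations `|ψ_y⟩⟨ψ_y|` against the pure effects `|φ_x⟩⟨φ_x|`, then every linear
relation `∑ g_y ρ_y = 0` would give `Tr((∑ g_y |ψ_y⟩⟨ψ_y|) |φ_x⟩⟨φ_x|) = 0` for all `x`.
Since the `|φ_x⟩⟨φ_x|` span all matrices, `∑ g_y |ψ_y⟩⟨ψ_y| = 0`, so `g = 0`: the `N + 1`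
preparations `ρ_y` would be linearly independent inside the span of the `N` matrices `Γ_i`,
which has dimension at most `N`.
-/

theorem trace_outer_mul_outer {d : ℕ} (a b : Fin d → ℂ) :
    (outer a * outer b).trace = ((‖qinner a b‖ ^ 2 : ℝ) : ℂ) := by
  rw [← Complex.normSq_eq_norm_sq, Complex.normSq_eq_conj_mul_self]
  simp only [Matrix.trace, Matrix.diag, Matrix.mul_apply, outer, qinner, Matrix.of_apply,
    map_sum, map_mul, Complex.conj_conj, Finset.sum_mul_sum]
  refine Finset.sum_congr rfl fun i _ => Finset.sum_congr rfl fun j _ => ?_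
  ring

theorem Matrix.eq_zero_of_trace_mul_eq_zero_of_span_eq_top {R n ι : Type*} [CommRing R]
    [Fintype n] {Q : ι → Matrix n n R} (hQ : Submodule.span R (Set.range Q) = ⊤)
    {M : Matrix n n R} (hM : ∀ x, (M * Q x).trace = 0) : M = 0 := by
  let L : Matrix n n R →ₗ[R] R := (traceLinearMap n R R).comp (LinearMap.mulLeft R M)
  have hL : L = 0 := LinearMap.ext_on_range hQ fun x => hM x
  refine ext_iff_trace_mul_right.mpr fun A => ?_
  simpa [L] using LinearMap.congr_fun hL A

theorem linearIndependent_of_trace_mul_eq {R n ι κ : Type*} [CommRing R] [Fintype n]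
    [Fintype ι] {P ρ : ι → Matrix n n R} {Q E : κ → Matrix n n R}
    (hP : LinearIndependent R P) (hQ : Submodule.span R (Set.range Q) = ⊤)
    (h : ∀ x y, (ρ y * E x).trace = (P y * Q x).trace) : LinearIndependent R ρ := by
  refine Fintype.linearIndependent_iff.mpr fun g hg => Fintype.linearIndependent_iff.mp hP g ?_
  refine eq_zero_of_trace_mul_eq_zero_of_span_eq_top hQ fun x => ?_
  calc ((∑ y, g y • P y) * Q x).trace
      = ∑ y, g y * (P y * Q x).trace := by
        simp [Finset.sum_mul, trace_sum, smul_mul]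
    _ = ∑ y, g y * (ρ y * E x).trace := by simp only [h]
    _ = ((∑ y, g y • ρ y) * E x).trace := by
        simp [Finset.sum_mul, trace_sum, smul_mul]
    _ = 0 := by rw [hg, zero_mul, trace_zero]

theorem card_le_of_linearIndependent_sum_smul {R M ι : Type*} [CommRing R] [StrongRankCondition R]
    [AddCommGroup M] [Module R M] [Fintype ι] {N : ℕ} (Γ : Fin N → M) (c : Fin N → ι → R)
    (hli : LinearIndependent R fun y => ∑ i, c i y • Γ i) : Fintype.card ι ≤ N := by
  have hcoeff : LinearIndependent R fun y i => c i y :=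
    LinearIndependent.of_comp (Fintype.linearCombination R Γ) <| by
      simpa [Function.comp_def, Fintype.linearCombination_apply] using hli
  simpa using hcoeff.fintype_card_le_finrank

theorem stmt_0_general (d N : ℕ)
    (ψ : Fin (N + 1) → Fin d → ℂ)
    (hψli : LinearIndependent ℂ fun y => outer (ψ y))
    (φ : Fin (d ^ 2) → Fin d → ℂ)
    (hφli : LinearIndependent ℂ fun x => outer (φ x))
    (Γ : Fin N → Matrix (Fin d) (Fin d) ℂ) :
    ¬ ∃ (lam : Fin N → Fin (N + 1) → ℂ)
        (E : Fin (d ^ 2) → Matrix (Fin d) (Fin d) ℂ),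
        (∀ x, IsEffect (E x)) ∧
        ∀ (x : Fin (d ^ 2)) (y : Fin (N + 1)),
          ((∑ i, lam i y • Γ i) * E x).trace
            = ((‖qinner (ψ y) (φ x)‖ ^ 2 : ℝ) : ℂ) := by
  rintro ⟨lam, E, -, h⟩
  have hspan : Submodule.span ℂ (Set.range fun x => outer (φ x)) = ⊤ :=
    hφli.span_eq_top_of_card_eq_finrank' (by simp [Module.finrank_matrix, sq])
  have hρ : LinearIndependent ℂ fun y => ∑ i, lam i y • Γ i :=
    linearIndependent_of_trace_mul_eq hψli hspan fun x y => by
      rw [h, trace_outer_mul_outer]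
  simpa using card_le_of_linearIndependent_sum_smul Γ lam hρ

/-- Theorem 1: if the free states lie in the span of `N < d²` linearly independent
matrices `Γ_i`, then the quantum correlations `p_Q(0|x,y) = |⟨ψ_y, φ_x⟩|²` built from
linearly independent pure preparations `ψ_0, …, ψ_N` and a spanning family of
pure effects `φ_0, …, φ_{d²-1}` cannot be realized by free states. -/
theorem stmt_0 (d N : ℕ) (hd : 2 ≤ d) (hN1 : 1 ≤ N) (hN2 : N < d ^ 2)
    (ψ : Fin (N + 1) → Fin d → ℂ) (hψu : ∀ y, qinner (ψ y) (ψ y) = 1)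
    (hψli : LinearIndependent ℂ fun y => outer (ψ y))
    (φ : Fin (d ^ 2) → Fin d → ℂ) (hφu : ∀ x, qinner (φ x) (φ x) = 1)
    (hφli : LinearIndependent ℂ fun x => outer (φ x))
    (Γ : Fin N → Matrix (Fin d) (Fin d) ℂ) :
    ¬ ∃ (lam : Fin N → Fin (N + 1) → ℂ)
        (E : Fin (d ^ 2) → Matrix (Fin d) (Fin d) ℂ),
        (∀ x, IsEffect (E x)) ∧
        ∀ (x : Fin (d ^ 2)) (y : Fin (N + 1)),
          ((∑ i, lam i y • Γ i) * E x).trace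
            = ((‖qinner (ψ y) (φ x)‖ ^ 2 : ℝ) : ℂ) :=
  stmt_0_general d N ψ hψli φ hφli Γ
end

section
/- Let d ≥ 2 and let N be a natural number with 1 ≤ N < d². Let ψ_0, …, ψ_{d²−1} be unit vectors in ℂ^d such that the rank-one projections |ψ_y⟩⟨ψ_y| (y = 0, …, d²−1) are linearly independent over ℂ (hence span the full space of d×d complex matrices), and let φ_0, …, φ_N be unit vectors in ℂ^d such that the rank-one projections |φ_x⟩⟨φ_x| (x = 0, …, N) are linearly independent over ℂ. Let Δ_1, …, Δ_N be arbitrary d×d complex matrices. Then there do NOT exist scalars μ_{i,x} ∈ ℂ (1 ≤ i ≤ N, 0 ≤ x ≤ N) and density matrices ρ_0, …, ρ_{d²−1} on ℂ^d such that Tr(ρ_y · (Σ_{i=1}^N μ_{i,x} Δ_i)) = |⟨ψ_y, φ_x⟩|² holds for all x ∈ {0,…,N} and y ∈ {0,…,d²−1}. In particular, the quantum correlations p_Q(0|x,y) = |⟨ψ_y, φ_x⟩|² cannot be realized by operations whose POVM elements lie in the linear span of any family of fewer than d² linearly independent free operation elements. -/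
/-!
The correlation vectors `v_x = (Tr(|ψ_y⟩⟨ψ_y| |φ_x⟩⟨φ_x|))_y ∈ ℂ^{d²}` are linearly independent:
the projections `|ψ_y⟩⟨ψ_y|` span all matrices, so `M ↦ (Tr(|ψ_y⟩⟨ψ_y| M))_y` is injective by
nondegeneracy of the trace pairing, and it maps the independent `|φ_x⟩⟨φ_x|` to the `v_x`.
A free realization would write `v_x = (Tr(ρ_y ∑ᵢ μ_{i,x} Δ_i))_y`, putting the `N + 1`
independent vectors `v_x` in the span of the `N` vectors `(Tr(ρ_y Δ_i))_y`.
-/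

open Matrix Complex
open scoped ComplexOrder

/-- A density matrix on `ℂ^d`: positive semidefinite with trace 1. -/
def IsDensityMatrix {d : ℕ} (ρ : Matrix (Fin d) (Fin d) ℂ) : Prop :=
  ρ.PosSemidef ∧ ρ.trace = 1

theorem LinearIndependent.card_le_card_of_forall_mem_span {R M ι κ : Type*} [Ring R]
    [StrongRankCondition R] [AddCommGroup M] [Module R M] [Fintype ι] [Fintype κ] {v : ι → M}
    (hv : LinearIndependent R v) {w : κ → M} (hvw : ∀ i, v i ∈ Submodule.span R (Set.range w)) :
    Fintype.card ι ≤ Fintype.card κ := by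
  classical
  have hle := linearIndependent_le_span' v hv (Set.range w) (Set.range_subset_iff.2 hvw)
  rw [Cardinal.mk_fintype, Nat.cast_le] at hle
  exact hle.trans (Fintype.card_range_le w)

section tracePairing

variable {ι n R : Type*} [Fintype n] [DecidableEq n] [CommSemiring R]

noncomputable def tracePairing (ρ : ι → Matrix n n R) : Matrix n n R →ₗ[R] ι → R :=
  LinearMap.pi fun y => traceLinearMap n R R ∘ₗ LinearMap.mulLeft R (ρ y)

@[simp]
theorem tracePairing_apply (ρ : ι → Matrix n n R) (M : Matrix n n R) (y : ι) :
    tracePairing ρ M y = (ρ y * M).trace := rfl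

theorem tracePairing_injective {b : ι → Matrix n n R}
    (hb : Submodule.span R (Set.range b) = ⊤) : Function.Injective (tracePairing b) := by
  intro M M' h
  have hfun : traceLinearMap n R R ∘ₗ LinearMap.mulRight R M
      = traceLinearMap n R R ∘ₗ LinearMap.mulRight R M' :=
    LinearMap.ext_on_range hb fun y => congrFun h y
  exact ext_iff_trace_mul_left.2 fun A => LinearMap.congr_fun hfun A

end tracePairing

theorem stmt_1_general (d N : ℕ)
    (ψ : Fin (d ^ 2) → Fin d → ℂ)
    (hψli : LinearIndependent ℂ fun y => outer (ψ y))
    (φ : Fin (N + 1) → Fin d → ℂ)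
    (hφli : LinearIndependent ℂ fun x => outer (φ x))
    (Δ : Fin N → Matrix (Fin d) (Fin d) ℂ) :
    ¬ ∃ (μ : Fin N → Fin (N + 1) → ℂ)
        (ρ : Fin (d ^ 2) → Matrix (Fin d) (Fin d) ℂ),
        (∀ y, IsDensityMatrix (ρ y)) ∧
        ∀ (x : Fin (N + 1)) (y : Fin (d ^ 2)),
          (ρ y * (∑ i, μ i x • Δ i)).trace
            = ((‖qinner (ψ y) (φ x)‖ ^ 2 : ℝ) : ℂ) := by
  rintro ⟨μ, ρ, -, hρ⟩
  set v := fun x => tracePairing (fun y => outer (ψ y)) (outer (φ x))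
  have hspan : Submodule.span ℂ (Set.range fun y => outer (ψ y)) = ⊤ :=
    hψli.span_eq_top_of_card_eq_finrank' (by simp [Module.finrank_matrix, sq])
  have hv : LinearIndependent ℂ v :=
    hφli.map' _ (LinearMap.ker_eq_bot.2 (tracePairing_injective hspan))
  have hv_eq : ∀ x, v x = ∑ i, μ i x • tracePairing ρ (Δ i) := fun x => by
    ext y
    simp [v, trace_outer_mul_outer, ← hρ x y, Finset.mul_sum]
  have hv_mem : ∀ x, v x ∈ Submodule.span ℂ (Set.range fun i => tracePairing ρ (Δ i)) :=
    fun x => hv_eq x ▸ Submodule.sum_mem _ fun i _ =>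
      Submodule.smul_mem _ _ (Submodule.subset_span ⟨i, rfl⟩)
  simpa using hv.card_le_card_of_forall_mem_span hv_mem

/-- Theorem 2: if the free operation elements lie in the span of `N < d²` linearly
independent matrices `Δ_i`, then the quantum correlations `p_Q(0|x,y) = |⟨ψ_y, φ_x⟩|²`
built from a spanning family of pure preparations `ψ_0, …, ψ_{d²-1}` and linearly
independent pure effects `φ_0, …, φ_N` cannot be realized by free operations. -/
theorem stmt_1 (d N : ℕ) (hd : 2 ≤ d) (hN1 : 1 ≤ N) (hN2 : N < d ^ 2)
    (ψ : Fin (d ^ 2) → Fin d → ℂ) (hψu : ∀ y, qinner (ψ y) (ψ y) = 1)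
    (hψli : LinearIndependent ℂ fun y => outer (ψ y))
    (φ : Fin (N + 1) → Fin d → ℂ) (hφu : ∀ x, qinner (φ x) (φ x) = 1)
    (hφli : LinearIndependent ℂ fun x => outer (φ x))
    (Δ : Fin N → Matrix (Fin d) (Fin d) ℂ) :
    ¬ ∃ (μ : Fin N → Fin (N + 1) → ℂ)
        (ρ : Fin (d ^ 2) → Matrix (Fin d) (Fin d) ℂ),
        (∀ y, IsDensityMatrix (ρ y)) ∧
        ∀ (x : Fin (N + 1)) (y : Fin (d ^ 2)),
          (ρ y * (∑ i, μ i x • Δ i)).trace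
            = ((‖qinner (ψ y) (φ x)‖ ^ 2 : ℝ) : ℂ) :=
  stmt_1_general d N ψ hψli φ hφli Δ
end

section
/- Let ρ_0, ρ_1, ρ_2 be 2×2 diagonal complex positive semidefinite matrices of trace 1 (incoherent qubit states), and for each x ∈ {0,1} let E_{0,x} and E_{1,x} be 2×2 diagonal positive semidefinite matrices with E_{0,x} + E_{1,x} ≤ 𝟙 in the Loewner order (POVM elements of incoherent operations). Then the coherence witness W_C := Re Tr(E_{0,0} ρ_0) + Re Tr(E_{0,0} ρ_1) + Re Tr(E_{0,1} ρ_0) + Re Tr(E_{1,1} ρ_1) + Re Tr(E_{1,0} ρ_2) satisfies W_C ≤ 4. -/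
/-!
A diagonal POVM element only sees the diagonal of a state, so with incoherent measurements the
witness is the score of a classical prepare-and-measure strategy: each state is a probability
vector `p y` on `{0, 1}`, and each measurement a sub-stochastic response to the observed index.
Optimizing the response pointwise bounds the score by a sum of maxima of the `p y i`; every
branch of these maxima is the score of a deterministic classical strategy, which is at most 4.
-/

open Matrix Complex
open scoped ComplexOrder

theorem Matrix.IsDiag.trace_mul {n R : Type*} [Fintype n] [DecidableEq n] [Semiring R]
    {M : Matrix n n R} (hM : M.IsDiag) (N : Matrix n n R) :
    (M * N).trace = ∑ i, M i i * N i i := by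
  rw [← hM.diagonal_diag]
  simp [trace, diagonal_mul]

theorem Matrix.PosSemidef.re_trace_mul_of_isDiag {n : Type*} [Fintype n] [DecidableEq n]
    {M : Matrix n n ℂ} (hM : M.PosSemidef) (hMd : M.IsDiag) (N : Matrix n n ℂ) :
    (M * N).trace.re = ∑ i, (M i i).re * (N i i).re := by
  rw [hMd.trace_mul, re_sum]
  refine Finset.sum_congr rfl fun i _ => ?_
  rw [eq_re_of_ofReal_le (hM.diag_nonneg (i := i)), re_ofReal_mul]
  simp

theorem mul_add_mul_le_max {a c u v : ℝ} (ha : 0 ≤ a) (hc : 0 ≤ c) (hac : a + c ≤ 1)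
    (hu : 0 ≤ u) : a * u + c * v ≤ max u v :=
  calc a * u + c * v ≤ a * max u v + c * max u v := by
        gcongr
        · exact le_max_left u v
        · exact le_max_right u v
    _ = (a + c) * max u v := by ring
    _ ≤ max u v := mul_le_of_le_one_left (le_max_of_le_left hu) hac

/- Once a branch of every `max` is chosen, the left-hand side is linear in each `p y`, so it is
maximal at a vertex, where it is the score of a deterministic classical strategy, at most 4. -/
theorem sum_max_add_sum_max_le_four {p : Fin 3 → Fin 2 → ℝ} (hp : ∀ y i, 0 ≤ p y i)
    (hsum : ∀ y, ∑ i, p y i = 1) :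
    ∑ i, max (p 0 i + p 1 i) (p 2 i) + ∑ i, max (p 0 i) (p 1 i) ≤ 4 := by
  have h := fun y => (Fin.sum_univ_two (p y)).symm.trans (hsum y)
  have := hp 0 0; have := hp 0 1; have := hp 1 0; have := hp 1 1; have := hp 2 0; have := hp 2 1
  have := h 0; have := h 1; have := h 2
  simp only [Fin.sum_univ_two, max_def]
  split_ifs <;> linarith

theorem stmt_6_general (ρ : Fin 3 → Matrix (Fin 2) (Fin 2) ℂ)
    (hρpsd : ∀ y, (ρ y).PosSemidef) (hρtr : ∀ y, (ρ y).trace = 1)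
    (E : Fin 2 → Fin 2 → Matrix (Fin 2) (Fin 2) ℂ)
    (hEpsd : ∀ j x, (E j x).PosSemidef) (hEdiag : ∀ j x, (E j x).IsDiag)
    (hEsum : ∀ x, (1 - (E 0 x + E 1 x)).PosSemidef) :
    ((E 0 0 * ρ 0).trace).re + ((E 0 0 * ρ 1).trace).re +
      ((E 0 1 * ρ 0).trace).re + ((E 1 1 * ρ 1).trace).re +
      ((E 1 0 * ρ 2).trace).re ≤ 4 := by
  set p : Fin 3 → Fin 2 → ℝ := fun y i => (ρ y i i).re
  set e : Fin 2 → Fin 2 → Fin 2 → ℝ := fun j x i => (E j x i i).re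
  have hp : ∀ y i, 0 ≤ p y i := fun y i => (nonneg_iff.mp (hρpsd y).diag_nonneg).1
  have hpsum : ∀ y, ∑ i, p y i = 1 := fun y => by
    simpa [trace, re_sum] using congrArg re (hρtr y)
  have he : ∀ j x i, 0 ≤ e j x i := fun j x i => (nonneg_iff.mp (hEpsd j x).diag_nonneg).1
  have hesum : ∀ x i, e 0 x i + e 1 x i ≤ 1 := fun x i => by
    simpa [e, sub_nonneg] using (nonneg_iff.mp ((hEsum x).diag_nonneg (i := i))).1
  simp only [(hEpsd _ _).re_trace_mul_of_isDiag (hEdiag _ _)]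
  calc _ = ∑ i, (e 0 0 i * (p 0 i + p 1 i) + e 1 0 i * p 2 i)
          + ∑ i, (e 0 1 i * p 0 i + e 1 1 i * p 1 i) := by
        simp only [Fin.sum_univ_two]; ring
    _ ≤ ∑ i, max (p 0 i + p 1 i) (p 2 i) + ∑ i, max (p 0 i) (p 1 i) := by
        gcongr with i _ i
        · exact mul_add_mul_le_max (he 0 0 i) (he 1 0 i) (hesum 0 i)
            (add_nonneg (hp 0 i) (hp 1 i))
        · exact mul_add_mul_le_max (he 0 1 i) (he 1 1 i) (hesum 1 i) (hp 0 i)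
    _ ≤ 4 := sum_max_add_sum_max_le_four hp hpsum

/-- Incoherent bound `β_C = 4` for the coherence witness: for diagonal (incoherent)
qubit states `ρ_0, ρ_1, ρ_2` and diagonal (incoherent) POVM elements `E_{j,x}` with
`E_{0,x} + E_{1,x} ≤ 𝟙`, the witness
`W_C = p(0|0,0) + p(0|0,1) + p(0|1,0) + p(1|1,1) + p(1|0,2)` with
`p(j|x,y) = Re Tr(E_{j,x} ρ_y)` is at most `4`. -/
theorem stmt_6 (ρ : Fin 3 → Matrix (Fin 2) (Fin 2) ℂ)
    (hρpsd : ∀ y, (ρ y).PosSemidef) (hρtr : ∀ y, (ρ y).trace = 1)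
    (hρdiag : ∀ y, (ρ y).IsDiag)
    (E : Fin 2 → Fin 2 → Matrix (Fin 2) (Fin 2) ℂ)
    (hEpsd : ∀ j x, (E j x).PosSemidef) (hEdiag : ∀ j x, (E j x).IsDiag)
    (hEsum : ∀ x, (1 - (E 0 x + E 1 x)).PosSemidef) :
    ((E 0 0 * ρ 0).trace).re + ((E 0 0 * ρ 1).trace).re +
      ((E 0 1 * ρ 0).trace).re + ((E 1 1 * ρ 1).trace).re +
      ((E 1 0 * ρ 2).trace).re ≤ 4 :=
  stmt_6_general ρ hρpsd hρtr E hEpsd hEdiag hEsum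
end

section
/- Let c = cos(π/8) and s = sin(π/8), and define the unit vectors u = (c, s), v = (−s, c), w = (c, −s), z = (s, c), e₀ = (1, 0), and p = (1/√2, 1/√2) in ℂ². Then |⟨u, e₀⟩|² + |⟨u, p⟩|² + |⟨w, e₀⟩|² + |⟨z, p⟩|² + |⟨v, v⟩|² = 3 + √2. In particular, this value of the coherence witness W_C exceeds the incoherent bound 4, since 3 + √2 > 4. -/
open Complex Real

/-- Quantum value of the coherence witness: with `c = cos(π/8)`, `s = sin(π/8)`,
the unit vectors `u = (c,s)`, `v = (−s,c)`, `w = (c,−s)`, `z = (s,c)`, `e₀ = (1,0)`,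
`p = (1/√2, 1/√2)` give
`|⟨u,e₀⟩|² + |⟨u,p⟩|² + |⟨w,e₀⟩|² + |⟨z,p⟩|² + |⟨v,v⟩|² = 3 + √2 > 4`,
violating the incoherent bound `β_C = 4`. -/
theorem stmt_7 :
    let c : ℝ := Real.cos (Real.pi / 8)
    let s : ℝ := Real.sin (Real.pi / 8)
    let u : Fin 2 → ℂ := ![(c : ℂ), (s : ℂ)]
    let v : Fin 2 → ℂ := ![(-s : ℂ), (c : ℂ)]
    let w : Fin 2 → ℂ := ![(c : ℂ), (-s : ℂ)]
    let z : Fin 2 → ℂ := ![(s : ℂ), (c : ℂ)]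
    let e₀ : Fin 2 → ℂ := ![1, 0]
    let p : Fin 2 → ℂ := ![(1 / Real.sqrt 2 : ℝ), (1 / Real.sqrt 2 : ℝ)]
    ‖qinner u e₀‖ ^ 2 + ‖qinner u p‖ ^ 2 + ‖qinner w e₀‖ ^ 2 +
        ‖qinner z p‖ ^ 2 + ‖qinner v v‖ ^ 2 = 3 + Real.sqrt 2 ∧
      (3 : ℝ) + Real.sqrt 2 > 4 := by
  intro c s u v w z e₀ p
  have h2 : Real.sqrt 2 > 1 := by
    nlinarith [Real.sq_sqrt (by norm_num : (0:ℝ) ≤ 2), Real.sqrt_nonneg 2]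
  refine ⟨?_, by linarith⟩
  have hs2 : Real.sqrt 2 ^ 2 = 2 := Real.sq_sqrt (by norm_num)
  have hpi4 : Real.pi / 8 * 2 = Real.pi / 4 := by ring
  have hcos : c ^ 2 = 1 / 2 + Real.sqrt 2 / 4 := by
    have := Real.cos_sq (Real.pi / 8)
    rw [show 2 * (Real.pi / 8) = Real.pi / 4 by ring, Real.cos_pi_div_four] at this
    simp [c] at this ⊢
    rw [this]; ring
  have hsin : 2 * s * c = Real.sqrt 2 / 2 := by
    have := Real.sin_two_mul (Real.pi / 8)
    rw [show 2 * (Real.pi / 8) = Real.pi / 4 by ring, Real.sin_pi_div_four] at this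
    show 2 * Real.sin (Real.pi/8) * Real.cos (Real.pi/8) = Real.sqrt 2 / 2
    linarith [this]
  have hsc : s ^ 2 + c ^ 2 = 1 := Real.sin_sq_add_cos_sq _
  simp only [u, v, w, z, e₀, p, qinner, Fin.sum_univ_two, Matrix.cons_val_zero, Matrix.cons_val_one,
    Matrix.head_cons, map_neg, Complex.conj_ofReal, mul_one, mul_zero, add_zero]
  rw [show ((c:ℂ)*(((1/Real.sqrt 2 : ℝ)):ℂ) + (s:ℂ)*(((1/Real.sqrt 2 : ℝ)):ℂ) : ℂ)
        = (((c + s)/Real.sqrt 2 : ℝ):ℂ) by push_cast; ring,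
     show ((s:ℂ)*(((1/Real.sqrt 2 : ℝ)):ℂ) + (c:ℂ)*(((1/Real.sqrt 2 : ℝ)):ℂ) : ℂ)
        = (((s + c)/Real.sqrt 2 : ℝ):ℂ) by push_cast; ring,
     show (-(s:ℂ) * -(s:ℂ) + (c:ℂ)*(c:ℂ) : ℂ) = (((s^2 + c^2 : ℝ)):ℂ) by push_cast; ring]
  simp only [Complex.norm_real]
  rw [hsc]
  have hd : ((c+s)/Real.sqrt 2)^2 = 1/2 + Real.sqrt 2/4 := by
    rw [div_pow, hs2]
    nlinarith [hsin, hcos, hsc]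
  have hd2 : ((s+c)/Real.sqrt 2)^2 = 1/2 + Real.sqrt 2/4 := by
    rw [show s + c = c + s by ring]; exact hd
  simp only [Real.norm_eq_abs, _root_.sq_abs, norm_one]
  rw [hd, hd2, hcos]
  norm_num
  ring
end

section
/- Let d ≥ 1. For y = (y₀, y₁) ∈ {0,…,d−1}², let ρ_{y₀y₁} be arbitrary d×d complex density matrices, and let (A_j)_{j=0}^{d−1} and (B_j)_{j=0}^{d−1} be two families of d×d diagonal positive semidefinite matrices with Σ_{j=0}^{d−1} A_j = 𝟙 and Σ_{j=0}^{d−1} B_j = 𝟙 (incoherent d-outcome measurements). Then W_{C,d} := Σ_{y₀=0}^{d−1} Σ_{y₁=0}^{d−1} [ Re Tr(A_{y₀} ρ_{y₀y₁}) + Re Tr(B_{y₁} ρ_{y₀y₁}) ] ≤ d² + d. -/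
open Matrix Complex
open scoped ComplexOrder

/-! Incoherent measurements only see the diagonals: with `a_i = (A_{y₀})_{ii}`, `b_i = (B_{y₁})_{ii}`
and the probability vector `p_i = (ρ_{y₀y₁})_{ii}`, each term of the witness is
`∑ᵢ (aᵢ + bᵢ) pᵢ ≤ 1 + ∑ᵢ aᵢ bᵢ`, because `a + b ≤ 1 + ab` on `[0, 1]`. Summed over `y₀, y₁`, the
correlation term becomes `∑ᵢ (∑_{y₀} aᵢ)(∑_{y₁} bᵢ) = d`, since the diagonals of a POVM sum to one. -/

theorem Matrix.IsDiag.trace_mul_s8 {n α : Type*} [Fintype n] [NonUnitalNonAssocSemiring α]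
    {A : Matrix n n α} (hA : A.IsDiag) (B : Matrix n n α) :
    (A * B).trace = ∑ i, A i i * B i i := by
  classical
  rw [← hA.diagonal_diag]
  simp [Matrix.trace, diagonal_mul]

theorem Matrix.IsDiag.re_trace_mul {n : Type*} [Fintype n] {A : Matrix n n ℂ} (hA : A.IsDiag)
    (hAh : A.IsHermitian) (B : Matrix n n ℂ) :
    (A * B).trace.re = ∑ i, (A i i).re * (B i i).re := by
  rw [hA.trace_mul_s8, re_sum]
  refine Finset.sum_congr rfl fun i _ => ?_
  have hreal : (A i i).im = 0 := conj_eq_iff_im.1 (hAh.apply i i)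
  rw [mul_re, hreal, zero_mul, sub_zero]

theorem Matrix.sum_re_apply_self_eq_one {n ι : Type*} [Fintype ι] [DecidableEq n]
    {A : ι → Matrix n n ℂ} (hA : ∑ j, A j = 1) (i : n) : ∑ j, (A j i i).re = 1 := by
  rw [← re_sum, ← Matrix.sum_apply, hA, one_apply_eq, one_re]

theorem Matrix.PosSemidef.re_apply_self_nonneg {n : Type*} {A : Matrix n n ℂ} (hA : A.PosSemidef)
    (i : n) : 0 ≤ (A i i).re :=
  (nonneg_iff.1 hA.diag_nonneg).1

theorem add_mul_le_add_mul_of_mem_Icc {a b p : ℝ} (ha : a ∈ Set.Icc (0 : ℝ) 1)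
    (hb : b ∈ Set.Icc (0 : ℝ) 1) (hp : p ∈ Set.Icc (0 : ℝ) 1) : (a + b) * p ≤ p + a * b := by
  obtain ⟨ha0, ha1⟩ := ha
  obtain ⟨hb0, hb1⟩ := hb
  obtain ⟨hp0, hp1⟩ := hp
  -- `(a + b) p = p + a b p - (1 - a)(1 - b) p`
  nlinarith [mul_nonneg (mul_nonneg (sub_nonneg.2 ha1) (sub_nonneg.2 hb1)) hp0,
    mul_nonneg (mul_nonneg ha0 hb0) (sub_nonneg.2 hp1)]

theorem mem_Icc_of_sum_eq_one {ι : Type*} [Fintype ι] {p : ι → ℝ} (hp0 : ∀ i, 0 ≤ p i)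
    (hp : ∑ i, p i = 1) (i : ι) : p i ∈ Set.Icc (0 : ℝ) 1 :=
  ⟨hp0 i, hp ▸ Finset.single_le_sum (fun j _ => hp0 j) (Finset.mem_univ i)⟩

theorem sum_add_mul_le_one_add_sum_mul {ι : Type*} [Fintype ι] {a b p : ι → ℝ}
    (ha : ∀ i, a i ∈ Set.Icc (0 : ℝ) 1) (hb : ∀ i, b i ∈ Set.Icc (0 : ℝ) 1)
    (hp0 : ∀ i, 0 ≤ p i) (hp : ∑ i, p i = 1) :
    ∑ i, (a i + b i) * p i ≤ 1 + ∑ i, a i * b i := by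
  calc ∑ i, (a i + b i) * p i ≤ ∑ i, (p i + a i * b i) :=
        Finset.sum_le_sum fun i _ =>
          add_mul_le_add_mul_of_mem_Icc (ha i) (hb i) (mem_Icc_of_sum_eq_one hp0 hp i)
    _ = 1 + ∑ i, a i * b i := by rw [Finset.sum_add_distrib, hp]

theorem sum_sum_sum_add_mul_le_card_sq_add_card {κ ι : Type*} [Fintype κ] [Fintype ι]
    {a b : κ → ι → ℝ} {p : κ → κ → ι → ℝ}
    (ha0 : ∀ j i, 0 ≤ a j i) (ha : ∀ i, ∑ j, a j i = 1)
    (hb0 : ∀ j i, 0 ≤ b j i) (hb : ∀ i, ∑ j, b j i = 1)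
    (hp0 : ∀ y₀ y₁ i, 0 ≤ p y₀ y₁ i) (hp : ∀ y₀ y₁, ∑ i, p y₀ y₁ i = 1) :
    ∑ y₀, ∑ y₁, ∑ i, (a y₀ i + b y₁ i) * p y₀ y₁ i
      ≤ (Fintype.card κ : ℝ) ^ 2 + Fintype.card ι := by
  have hcorr : ∑ y₀, ∑ y₁, ∑ i, a y₀ i * b y₁ i = Fintype.card ι := by
    calc ∑ y₀, ∑ y₁, ∑ i, a y₀ i * b y₁ i = ∑ y₀, ∑ i, ∑ y₁, a y₀ i * b y₁ i :=
          Finset.sum_congr rfl fun _ _ => Finset.sum_comm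
      _ = ∑ i, ∑ y₀, ∑ y₁, a y₀ i * b y₁ i := Finset.sum_comm
      _ = ∑ i, (∑ y₀, a y₀ i) * ∑ y₁, b y₁ i := by simp only [Finset.sum_mul_sum]
      _ = Fintype.card ι := by simp [ha, hb]
  calc ∑ y₀, ∑ y₁, ∑ i, (a y₀ i + b y₁ i) * p y₀ y₁ i
      ≤ ∑ y₀, ∑ y₁, (1 + ∑ i, a y₀ i * b y₁ i) :=
        Finset.sum_le_sum fun y₀ _ => Finset.sum_le_sum fun y₁ _ =>
          sum_add_mul_le_one_add_sum_mul (fun i => mem_Icc_of_sum_eq_one (ha0 · i) (ha i) y₀)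
            (fun i => mem_Icc_of_sum_eq_one (hb0 · i) (hb i) y₁) (hp0 y₀ y₁) (hp y₀ y₁)
    _ = (Fintype.card κ : ℝ) ^ 2 + Fintype.card ι := by
        simp only [Finset.sum_add_distrib, hcorr, Finset.sum_const, Finset.card_univ,
          nsmul_eq_mul, mul_one]
        ring

theorem stmt_8_general (d : ℕ)
    (ρ : Fin d → Fin d → Matrix (Fin d) (Fin d) ℂ)
    (hρpsd : ∀ y₀ y₁, (ρ y₀ y₁).PosSemidef) (hρtr : ∀ y₀ y₁, (ρ y₀ y₁).trace = 1)
    (A B : Fin d → Matrix (Fin d) (Fin d) ℂ)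
    (hApsd : ∀ j, (A j).PosSemidef) (hAdiag : ∀ j, (A j).IsDiag)
    (hBpsd : ∀ j, (B j).PosSemidef) (hBdiag : ∀ j, (B j).IsDiag)
    (hAsum : ∑ j, A j = 1) (hBsum : ∑ j, B j = 1) :
    ∑ y₀ : Fin d, ∑ y₁ : Fin d,
        (((A y₀ * ρ y₀ y₁).trace).re + ((B y₁ * ρ y₀ y₁).trace).re)
      ≤ (d : ℝ) ^ 2 + d := by
  have hρ : ∀ y₀ y₁, ∑ i, (ρ y₀ y₁ i i).re = 1 := fun y₀ y₁ => by
    rw [← re_sum, ← one_re, ← hρtr y₀ y₁]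
    rfl
  calc ∑ y₀ : Fin d, ∑ y₁ : Fin d,
        (((A y₀ * ρ y₀ y₁).trace).re + ((B y₁ * ρ y₀ y₁).trace).re)
      = ∑ y₀, ∑ y₁, ∑ i, ((A y₀ i i).re + (B y₁ i i).re) * (ρ y₀ y₁ i i).re := by
        simp only [(hAdiag _).re_trace_mul (hApsd _).1, (hBdiag _).re_trace_mul (hBpsd _).1,
          add_mul, Finset.sum_add_distrib]
    _ ≤ (Fintype.card (Fin d) : ℝ) ^ 2 + Fintype.card (Fin d) :=
        sum_sum_sum_add_mul_le_card_sq_add_card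
          (fun j i => (hApsd j).re_apply_self_nonneg i) (sum_re_apply_self_eq_one hAsum)
          (fun j i => (hBpsd j).re_apply_self_nonneg i) (sum_re_apply_self_eq_one hBsum)
          (fun y₀ y₁ i => (hρpsd y₀ y₁).re_apply_self_nonneg i) hρ
    _ = (d : ℝ) ^ 2 + d := by rw [Fintype.card_fin]

/-- Incoherent bound `β_{C,d} = d² + d` for the coherence witness in dimension `d`:
for arbitrary density matrices `ρ_{y₀y₁}` and two incoherent (diagonal) `d`-outcome
measurements `(A_j)` and `(B_j)` with `∑ A_j = 𝟙 = ∑ B_j`, we have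
`W_{C,d} = ∑_{y₀,y₁} [Re Tr(A_{y₀} ρ_{y₀y₁}) + Re Tr(B_{y₁} ρ_{y₀y₁})] ≤ d² + d`. -/
theorem stmt_8 (d : ℕ) (hd : 1 ≤ d)
    (ρ : Fin d → Fin d → Matrix (Fin d) (Fin d) ℂ)
    (hρpsd : ∀ y₀ y₁, (ρ y₀ y₁).PosSemidef) (hρtr : ∀ y₀ y₁, (ρ y₀ y₁).trace = 1)
    (A B : Fin d → Matrix (Fin d) (Fin d) ℂ)
    (hApsd : ∀ j, (A j).PosSemidef) (hAdiag : ∀ j, (A j).IsDiag)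
    (hBpsd : ∀ j, (B j).PosSemidef) (hBdiag : ∀ j, (B j).IsDiag)
    (hAsum : ∑ j, A j = 1) (hBsum : ∑ j, B j = 1) :
    ∑ y₀ : Fin d, ∑ y₁ : Fin d,
        (((A y₀ * ρ y₀ y₁).trace).re + ((B y₁ * ρ y₀ y₁).trace).re)
      ≤ (d : ℝ) ^ 2 + d :=
  stmt_8_general d ρ hρpsd hρtr A B hApsd hAdiag hBpsd hBdiag hAsum hBsum
end

section
/- Let d ≥ 1 and let a, b : {0,…,d−1} × {0,…,d−1} → ℝ be nonnegative functions such that for every k, Σ_{i=0}^{d−1} a(i,k) = 1 and Σ_{j=0}^{d−1} b(j,k) = 1. Then Σ_{i=0}^{d−1} Σ_{j=0}^{d−1} max_{k∈{0,…,d−1}} ( a(i,k) + b(j,k) ) ≤ d² + d. -/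
/-- Combinatorial core of the incoherent bound `β_{C,d} = d² + d`: if the columns of
nonnegative `a, b : Fin d → Fin d → ℝ` are normalized (`∑_i a(i,k) = 1 = ∑_j b(j,k)`
for every `k`), then `∑_{i,j} max_k (a(i,k) + b(j,k)) ≤ d² + d`. -/
theorem stmt_9 (d : ℕ) (hd : 1 ≤ d) (a b : Fin d → Fin d → ℝ)
    (ha0 : ∀ i k, 0 ≤ a i k) (hb0 : ∀ j k, 0 ≤ b j k)
    (ha1 : ∀ k, ∑ i, a i k = 1) (hb1 : ∀ k, ∑ j, b j k = 1) :
    ∑ i : Fin d, ∑ j : Fin d, (⨆ k : Fin d, (a i k + b j k))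
      ≤ (d : ℝ) ^ 2 + d := by
  haveI : Nonempty (Fin d) := Fin.pos_iff_nonempty.mp hd
  have haub : ∀ i k, a i k ≤ 1 := by
    intro i k
    have := Finset.single_le_sum (f := fun i => a i k)
      (fun i _ => ha0 i k) (Finset.mem_univ i)
    rw [ha1 k] at this; exact this
  have hbub : ∀ j k, b j k ≤ 1 := by
    intro j k
    have := Finset.single_le_sum (f := fun j => b j k)
      (fun j _ => hb0 j k) (Finset.mem_univ j)
    rw [hb1 k] at this; exact this
  have key : ∀ i j, (⨆ k : Fin d, (a i k + b j k)) ≤ 1 + ∑ k, a i k * b j k := by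
    intro i j
    apply ciSup_le
    intro k
    have h1 : a i k + b j k ≤ 1 + a i k * b j k := by
      nlinarith [mul_nonneg (sub_nonneg.mpr (haub i k)) (sub_nonneg.mpr (hbub j k))]
    have h2 : a i k * b j k ≤ ∑ k', a i k' * b j k' :=
      Finset.single_le_sum (f := fun k' => a i k' * b j k')
        (fun k' _ => mul_nonneg (ha0 i k') (hb0 j k')) (Finset.mem_univ k)
    linarith
  calc ∑ i : Fin d, ∑ j : Fin d, (⨆ k : Fin d, (a i k + b j k))
      ≤ ∑ i : Fin d, ∑ j : Fin d, (1 + ∑ k, a i k * b j k) := by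
        apply Finset.sum_le_sum; intro i _
        apply Finset.sum_le_sum; intro j _
        exact key i j
    _ = (d : ℝ) ^ 2 + d := by
        have hrearr : ∑ i : Fin d, ∑ j : Fin d, ∑ k, a i k * b j k = (d : ℝ) := by
          have : ∀ i : Fin d, ∑ j : Fin d, ∑ k, a i k * b j k
              = ∑ k, a i k := by
            intro i
            rw [Finset.sum_comm]
            refine Finset.sum_congr rfl fun k _ => ?_
            rw [← Finset.mul_sum, hb1 k, mul_one]
          simp only [this]
          rw [Finset.sum_comm]
          simp [ha1]
        simp only [Finset.sum_add_distrib, hrearr, Finset.sum_const,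
          Finset.card_univ, Fintype.card_fin, nsmul_eq_mul, mul_one]
        ring
end

section
/- Let d ≥ 2, ω = exp(2πi/d), and let (e_i)_{i=0}^{d−1} be the standard basis of ℂ^d. Define the unit vector ψ₀₀ = (1/√(2√d(1+√d))) ( (√d + 1) e₀ + Σ_{i=1}^{d−1} e_i ), the cyclic shift X with X e_i = e_{i+1 mod d}, the diagonal matrix Z with Z e_i = ω^i e_i, the states ψ_{y₀y₁} = X^{y₀} Z^{y₁} ψ₀₀ for y₀, y₁ ∈ {0,…,d−1}, and the Fourier basis vectors f_j = (1/√d) Σ_{k=0}^{d−1} ω^{jk} e_k. Then Σ_{y₀=0}^{d−1} Σ_{y₁=0}^{d−1} ( |⟨e_{y₀}, ψ_{y₀y₁}⟩|² + |⟨f_{y₁}, ψ_{y₀y₁}⟩|² ) = d² + d√d. In particular this quantum value of the coherence witness W_{C,d} exceeds the incoherent bound d² + d. -/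
/-!
`ψ_{y₀y₁}` is `ψ₀₀` translated by `y₀` and modulated by `y₁`, so its `y₀`-th coordinate is always
`ψ₀₀ 0 = (√d + 1) c`. Pairing with the Fourier vector `f_{y₁}`, the modulation of `Z^{y₁}` cancels
the phases of `f_{y₁}` exactly, up to a global phase from the shift; what is left is
`(1/√d) ∑ ψ₀₀ = (1/√d)(√d + d) c = (√d + 1) c` in modulus. Each of the `2d²` terms therefore
contributes `(√d + 1)² c² = (1 + 1/√d)/2`, giving `d² + d√d`.
-/

open Matrix Complex

lemma qinner_single {d : ℕ} (j : Fin d) (v : Fin d → ℂ) : qinner (Pi.single j 1) v = v j := by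
  simp [qinner, Pi.single_apply]

section ShiftClock

variable {R : Type*} [Semiring R] {d : ℕ}

def shiftMatrix (R : Type*) [Semiring R] (d : ℕ) : Matrix (Fin d) (Fin d) R :=
  Matrix.of fun i j => if (i : ℕ) = ((j : ℕ) + 1) % d then 1 else 0

def clockMatrix (ω : R) (d : ℕ) : Matrix (Fin d) (Fin d) R :=
  Matrix.diagonal fun i => ω ^ (i : ℕ)

lemma clockMatrix_pow_mulVec_apply (ω : R) (b : ℕ) (v : Fin d → R) (i : Fin d) :
    (clockMatrix ω d ^ b *ᵥ v) i = (ω ^ (i : ℕ)) ^ b * v i := by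
  simp [clockMatrix, diagonal_pow, mulVec_diagonal]

variable [NeZero d]

lemma shiftMatrix_mulVec_apply (v : Fin d → R) (i : Fin d) :
    (shiftMatrix R d *ᵥ v) i = v (i - 1) := by
  have hi : ∀ j : Fin d, (i : ℕ) = ((j : ℕ) + 1) % d ↔ j = i - 1 := fun j => by
    rw [eq_sub_iff_add_eq, eq_comm, Fin.ext_iff, Fin.val_add, Fin.val_one', Nat.add_mod_mod]
  simp [shiftMatrix, mulVec, dotProduct, hi]

open Fin.NatCast in
lemma shiftMatrix_pow_mulVec_apply (a : ℕ) (v : Fin d → R) (i : Fin d) :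
    (shiftMatrix R d ^ a *ᵥ v) i = v (i - a) := by
  induction a generalizing i with
  | zero => simp
  | succ n ih =>
    rw [pow_succ', ← mulVec_mulVec, shiftMatrix_mulVec_apply, ih]
    congr 1
    push_cast
    abel

lemma shiftMatrix_pow_mul_clockMatrix_pow_mulVec_apply (ω : R) (a b : Fin d)
    (v : Fin d → R) (i : Fin d) :
    ((shiftMatrix R d ^ (a : ℕ) * clockMatrix ω d ^ (b : ℕ)) *ᵥ v) i
      = (ω ^ ((i - a : Fin d) : ℕ)) ^ (b : ℕ) * v (i - a) := by
  rw [← mulVec_mulVec, shiftMatrix_pow_mulVec_apply, Fin.cast_val_eq_self,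
    clockMatrix_pow_mulVec_apply]

end ShiftClock

lemma pow_val_add_of_pow_eq_one {M : Type*} [Monoid M] {ω : M} {d : ℕ} (hω : ω ^ d = 1)
    (k l : Fin d) : ω ^ ((k + l : Fin d) : ℕ) = ω ^ (k : ℕ) * ω ^ (l : ℕ) := by
  rw [Fin.val_add, ← pow_eq_pow_mod _ hω, pow_add]

lemma sum_ite_val_eq_zero {M : Type*} [AddCommGroup M] {d : ℕ} [NeZero d] (a b : M) :
    ∑ i : Fin d, (if (i : ℕ) = 0 then a else b) = a - b + d • b := by
  have h : ∀ i : Fin d, (if (i : ℕ) = 0 then a else b) = (if i = 0 then a - b else 0) + b :=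
    fun i => by simp only [Fin.val_eq_zero_iff]; split_ifs <;> abel
  rw [Finset.sum_congr rfl fun i _ => h i, Finset.sum_add_distrib]
  simp

lemma qinner_fourier_shift_clock {d : ℕ} [NeZero d] {ω : ℂ} (hω : ω ^ d = 1) (r : ℝ)
    (a j : Fin d) (v : Fin d → ℂ) :
    qinner (fun k => (r : ℂ) * ω ^ ((j : ℕ) * (k : ℕ)))
        ((shiftMatrix ℂ d ^ (a : ℕ) * clockMatrix ω d ^ (j : ℕ)) *ᵥ v)
      = r * starRingEnd ℂ ((ω ^ (a : ℕ)) ^ (j : ℕ)) * ∑ l, v l := by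
  have hunit : ∀ l : Fin d, starRingEnd ℂ ((ω ^ (l : ℕ)) ^ (j : ℕ)) * (ω ^ (l : ℕ)) ^ (j : ℕ) = 1 :=
    fun l => by
      rw [conj_mul', norm_pow, norm_pow, norm_eq_one_of_pow_eq_one hω (NeZero.ne d)]
      simp
  rw [qinner, Finset.mul_sum]
  refine Fintype.sum_equiv (Equiv.subRight a) _ _ fun k => ?_
  obtain ⟨l, rfl⟩ : ∃ l, k = l + a := ⟨k - a, by abel⟩
  rw [shiftMatrix_pow_mul_clockMatrix_pow_mulVec_apply, Equiv.subRight_apply, add_sub_cancel_right,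
    mul_comm (j : ℕ), pow_mul, pow_val_add_of_pow_eq_one hω, mul_pow, map_mul, map_mul,
    conj_ofReal]
  linear_combination (r * starRingEnd ℂ ((ω ^ (a : ℕ)) ^ (j : ℕ)) * v l) * hunit l

/-- `(1 + 1/√x)/2` is the success probability of the quantum random access code. -/
lemma sq_amplitude {x : ℝ} (hx : 0 < x) :
    ((√x + 1) * (√(2 * √x * (1 + √x)))⁻¹) ^ 2 = (1 + (√x)⁻¹) / 2 := by
  have hs : 0 < √x := Real.sqrt_pos.2 hx
  rw [mul_pow, inv_pow, Real.sq_sqrt (by positivity)]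
  field_simp
  ring

/-- Quantum value `d² + d√d` of the coherence witness `W_{C,d}` from the quantum
random access code: with `ω = exp(2πi/d)`, the state
`ψ₀₀ ∝ (√d+1)e₀ + ∑_{i≥1} e_i` (normalized by `1/√(2√d(1+√d))`), the shift `X`,
the clock `Z`, the preparations `ψ_{y₀y₁} = X^{y₀} Z^{y₁} ψ₀₀`, the computational
basis `e_j` and the Fourier basis `f_j = (1/√d) ∑_k ω^{jk} e_k`, one has
`∑_{y₀,y₁} (|⟨e_{y₀}, ψ_{y₀y₁}⟩|² + |⟨f_{y₁}, ψ_{y₀y₁}⟩|²) = d² + d√d`, which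
exceeds the incoherent bound `d² + d`. -/
theorem stmt_10 (d : ℕ) (hd : 2 ≤ d) :
    let ω : ℂ := Complex.exp (2 * Real.pi * Complex.I / d)
    let c : ℝ := (Real.sqrt (2 * Real.sqrt d * (1 + Real.sqrt d)))⁻¹
    let ψ₀₀ : Fin d → ℂ :=
      fun i => if (i : ℕ) = 0 then (((Real.sqrt d + 1) * c : ℝ) : ℂ) else ((c : ℝ) : ℂ)
    let X : Matrix (Fin d) (Fin d) ℂ :=
      Matrix.of fun i j => if (i : ℕ) = ((j : ℕ) + 1) % d then 1 else 0
    let Z : Matrix (Fin d) (Fin d) ℂ := Matrix.diagonal fun i => ω ^ (i : ℕ)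
    let ψ : Fin d → Fin d → Fin d → ℂ :=
      fun y₀ y₁ => (X ^ (y₀ : ℕ) * Z ^ (y₁ : ℕ)).mulVec ψ₀₀
    let e : Fin d → Fin d → ℂ := fun j => Pi.single j 1
    let f : Fin d → Fin d → ℂ :=
      fun j k => ((Real.sqrt d)⁻¹ : ℝ) * ω ^ ((j : ℕ) * (k : ℕ))
    (∑ y₀ : Fin d, ∑ y₁ : Fin d,
        (‖qinner (e y₀) (ψ y₀ y₁)‖ ^ 2 + ‖qinner (f y₁) (ψ y₀ y₁)‖ ^ 2)
      = (d : ℝ) ^ 2 + d * Real.sqrt d) ∧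
      (d : ℝ) ^ 2 + d * Real.sqrt d > (d : ℝ) ^ 2 + d := by
  intro ω c ψ₀₀ X Z ψ e f
  have : NeZero d := ⟨by omega⟩
  have hd0 : (0 : ℝ) < d := by positivity
  have hsd : √(d : ℝ) ^ 2 = d := Real.sq_sqrt hd0.le
  have hω : ω ^ d = 1 := (Complex.isPrimitiveRoot_exp d (NeZero.ne d)).pow_eq_one
  have hψ : ∀ y₀ y₁, ψ y₀ y₁ = (shiftMatrix ℂ d ^ (y₀ : ℕ) * clockMatrix ω d ^ (y₁ : ℕ)) *ᵥ ψ₀₀ :=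
    fun _ _ => rfl
  have he : ∀ y₀ y₁, ‖qinner (e y₀) (ψ y₀ y₁)‖ = (√d + 1) * c := by
    intro y₀ y₁
    rw [qinner_single, hψ, shiftMatrix_pow_mul_clockMatrix_pow_mulVec_apply, sub_self]
    simp only [Fin.val_zero, pow_zero, one_pow, one_mul, ψ₀₀, if_true]
    exact Complex.norm_of_nonneg (by positivity)
  have hsum : ∑ l, ψ₀₀ l = (((√d + d) * c : ℝ) : ℂ) := by
    rw [sum_ite_val_eq_zero]
    push_cast
    ring
  have hf : ∀ y₀ y₁, ‖qinner (f y₁) (ψ y₀ y₁)‖ = (√d + 1) * c := by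
    intro y₀ y₁
    rw [hψ, qinner_fourier_shift_clock hω, hsum, norm_mul, norm_mul, Complex.norm_conj, norm_pow, norm_pow,
      norm_eq_one_of_pow_eq_one hω (NeZero.ne d), one_pow, one_pow, mul_one,
      Complex.norm_of_nonneg (by positivity), Complex.norm_of_nonneg (by positivity)]
    field_simp
    linear_combination -c * hsd
  have hamp : ((√d + 1) * c) ^ 2 = (1 + (√d)⁻¹) / 2 := sq_amplitude hd0
  refine ⟨?_, ?_⟩
  · simp only [he, hf, Finset.sum_const, Finset.card_univ, Fintype.card_fin, nsmul_eq_mul]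
    rw [← two_mul, hamp]
    field_simp
    linear_combination -hsd
  · have h1 : 1 < √(d : ℝ) := by
      rw [Real.lt_sqrt zero_le_one]
      exact_mod_cast (by omega : 1 ^ 2 < d)
    nlinarith
end

section
/- Let c = cos(π/8) and s = sin(π/8), and define the unit vectors u = (c, s), v = (−s, c), w = (c, −s), z = (s, c), e₀ = (1, 0), p = (1/√2, 1/√2), y₊ = (1/√2, i/√2), and y₋ = (1/√2, −i/√2) in ℂ². Then [ |⟨u, e₀⟩|² + |⟨u, p⟩|² + |⟨w, e₀⟩|² + |⟨z, p⟩|² + |⟨v, v⟩|² ] + |⟨y₊, y₊⟩|² − | |⟨y₊, e₀⟩|² − |⟨y₋, e₀⟩|² | − | |⟨y₊, p⟩|² − |⟨y₋, p⟩|² | = 4 + √2. In particular, this value of the imaginarity witness W_I exceeds the real bound 5, since 4 + √2 > 5. -/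
open Complex Real

/-!
The real vectors `u, v, w, z, e₀, p` are `(cos θ, sin θ)` for `θ = π/8, 5π/8, −π/8, 3π/8, 0, π/4`,
so each of the first four overlaps is `cos² (π/8) = (2 + √2)/4` and `|⟨v, v⟩|² = 1`; together with
`|⟨y₊, y₊⟩|² = 1` this gives `4 + √2`. The two absolute values vanish because `y₋ = conj y₊` while
`e₀` and `p` are real, so `⟨y₋, φ⟩ = conj ⟨y₊, φ⟩`: real states cannot tell `y₊` from `y₋`.
-/

section qinner

variable {d : ℕ}

theorem qinner_self (ψ : Fin d → ℂ) : qinner ψ ψ = ((∑ i, ‖ψ i‖ ^ 2 : ℝ) : ℂ) := by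
  simp only [qinner, conj_mul']
  push_cast
  rfl

theorem qinner_star_star (ψ φ : Fin d → ℂ) : qinner (star ψ) (star φ) = star (qinner ψ φ) := by
  simp [qinner, star_sum, mul_comm]

theorem norm_qinner_star_left (ψ : Fin d → ℂ) {φ : Fin d → ℂ} (hφ : star φ = φ) :
    ‖qinner (star ψ) φ‖ = ‖qinner ψ φ‖ := by
  rw [← hφ, qinner_star_star, hφ, norm_star]

end qinner

noncomputable def angleVec (θ : ℝ) : Fin 2 → ℂ := ![(Real.cos θ : ℂ), (Real.sin θ : ℂ)]

theorem star_angleVec (θ : ℝ) : star (angleVec θ) = angleVec θ := by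
  ext i
  fin_cases i <;> simp [angleVec, -ofReal_cos, -ofReal_sin]

theorem qinner_angleVec (a b : ℝ) : qinner (angleVec a) (angleVec b) = (Real.cos (a - b) : ℂ) := by
  simp only [qinner, angleVec, Fin.sum_univ_two, Matrix.cons_val_zero, Matrix.cons_val_one,
    conj_ofReal, Real.cos_sub]
  push_cast
  ring

theorem norm_sq_qinner_angleVec (a b : ℝ) :
    ‖qinner (angleVec a) (angleVec b)‖ ^ 2 = Real.cos (a - b) ^ 2 := by
  rw [qinner_angleVec, norm_real, Real.norm_eq_abs, sq_abs]

theorem cos_sq_pi_div_eight : Real.cos (π / 8) ^ 2 = (2 + √2) / 4 := by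
  rw [Real.cos_pi_div_eight, div_pow, Real.sq_sqrt (by positivity)]
  norm_num

/-- Quantum value of the imaginarity witness: with `c = cos(π/8)`, `s = sin(π/8)`,
the unit vectors `u = (c,s)`, `v = (−s,c)`, `w = (c,−s)`, `z = (s,c)`, `e₀ = (1,0)`,
`p = (1/√2, 1/√2)`, `yPlus = (1/√2, i/√2)`, `yMinus = (1/√2, −i/√2)` give
`W_I = [|⟨u,e₀⟩|² + |⟨u,p⟩|² + |⟨w,e₀⟩|² + |⟨z,p⟩|² + |⟨v,v⟩|²] + |⟨yPlus,yPlus⟩|²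
  − ||⟨yPlus,e₀⟩|² − |⟨yMinus,e₀⟩|²| − ||⟨yPlus,p⟩|² − |⟨yMinus,p⟩|²| = 4 + √2 > 5`,
violating the real bound `β_I = 5`. -/
theorem stmt_12 :
    let c : ℝ := Real.cos (Real.pi / 8)
    let s : ℝ := Real.sin (Real.pi / 8)
    let u : Fin 2 → ℂ := ![(c : ℂ), (s : ℂ)]
    let v : Fin 2 → ℂ := ![(-s : ℂ), (c : ℂ)]
    let w : Fin 2 → ℂ := ![(c : ℂ), (-s : ℂ)]
    let z : Fin 2 → ℂ := ![(s : ℂ), (c : ℂ)]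
    let e₀ : Fin 2 → ℂ := ![1, 0]
    let p : Fin 2 → ℂ := ![(1 / Real.sqrt 2 : ℝ), (1 / Real.sqrt 2 : ℝ)]
    let yPlus : Fin 2 → ℂ := ![(1 / Real.sqrt 2 : ℝ), Complex.I / Real.sqrt 2]
    let yMinus : Fin 2 → ℂ := ![(1 / Real.sqrt 2 : ℝ), -Complex.I / Real.sqrt 2]
    ((‖qinner u e₀‖ ^ 2 + ‖qinner u p‖ ^ 2 + ‖qinner w e₀‖ ^ 2 +
          ‖qinner z p‖ ^ 2 + ‖qinner v v‖ ^ 2) +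
        ‖qinner yPlus yPlus‖ ^ 2 -
        |‖qinner yPlus e₀‖ ^ 2 - ‖qinner yMinus e₀‖ ^ 2| -
        |‖qinner yPlus p‖ ^ 2 - ‖qinner yMinus p‖ ^ 2| = 4 + Real.sqrt 2) ∧
      (4 : ℝ) + Real.sqrt 2 > 5 := by
  intro c s u v w z e₀ p yPlus yMinus
  have hu : u = angleVec (π / 8) := rfl
  have hv : v = angleVec (π / 8 + π / 2) := by
    simp [v, angleVec, Real.cos_add_pi_div_two, Real.sin_add_pi_div_two, c, s]
  have hw : w = angleVec (-(π / 8)) := by simp [w, angleVec, c, s]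
  have hz : z = angleVec (π / 2 - π / 8) := by
    simp [z, angleVec, Real.cos_pi_div_two_sub, Real.sin_pi_div_two_sub, c, s]
  have he₀ : e₀ = angleVec 0 := by simp [e₀, angleVec]
  have hp : p = angleVec (π / 4) := by
    have h : 1 / √2 = √2 / 2 := by
      rw [div_eq_div_iff (by positivity) two_ne_zero, Real.mul_self_sqrt zero_le_two, one_mul]
    simp only [p, angleVec, Real.cos_pi_div_four, Real.sin_pi_div_four, h]
  have hyMinus : yMinus = star yPlus := by
    ext i
    fin_cases i <;> simp [yMinus, yPlus]
  have hyPlus : qinner yPlus yPlus = 1 := by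
    rw [qinner_self, Fin.sum_univ_two]
    norm_num [yPlus, norm_div]
  refine ⟨?_, by linarith [Real.one_lt_sqrt_two]⟩
  rw [hyMinus, hyPlus, hu, hv, hw, hz, he₀, hp, norm_qinner_star_left _ (star_angleVec _),
    norm_qinner_star_left _ (star_angleVec _)]
  simp only [norm_sq_qinner_angleVec, sub_self, abs_zero, sub_zero, norm_one, Real.cos_zero,
    Real.cos_neg, show π / 8 - π / 4 = -(π / 8) by ring,
    show π / 2 - π / 8 - π / 4 = π / 8 by ring, cos_sq_pi_div_eight]
  ring
end
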